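/- Let d ≥ 1, N ≥ 2, and let Γ_1, …, Γ_N be Hermitian d×d complex matrices satisfying the Clifford algebra relations Γ_j Γ_k + Γ_k Γ_j = 2δ_{jk} I. For η ∈ [0,1], the binary POVMs M_k = {½(I + ηΓ_k), ½(I − ηΓ_k)}, k = 1,…,N, are jointly measurable if and only if η ≤ 1/√N. Moreover, when η ≤ 1/√N the operators E_{x_1…x_N} := 2^{−N}(I + η Σ_k x_k Γ_k), (x_1,…,x_N) ∈ {+1,−1}^N, form a joint POVM for M_1,…,M_N. -/

import Mathlib

open scoped BigOperators ComplexOrder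

/-- The sign `+1`/`-1` encoded by a Boolean. -/
noncomputable def sgn (b : Bool) : ℝ := if b then 1 else -1

/-- Joint measurability of a family of binary-outcome POVMs on `ℂ^d`. -/
def JointlyMeasurable {d N : ℕ} (M : Fin N → Bool → Matrix (Fin d) (Fin d) ℂ) : Prop :=
  ∃ J : (Fin N → Bool) → Matrix (Fin d) (Fin d) ℂ,
    (∀ f, (J f).PosSemidef) ∧ (∑ f, J f = 1) ∧
      ∀ k b, ∑ f ∈ Finset.univ.filter (fun f => f k = b), J f = M k b

section Helpers

variable {n : Type*} [Fintype n] [DecidableEq n]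

lemma psd_diag_nonneg {A : Matrix n n ℂ} (hA : A.PosSemidef) (i : n) : 0 ≤ A i i := by
  have := hA.dotProduct_mulVec_nonneg (Pi.single i 1)
  simpa [dotProduct, Matrix.mulVec, Pi.single_apply, Finset.sum_ite_eq,
    Finset.sum_ite_eq'] using this

lemma psd_trace_nonneg {A : Matrix n n ℂ} (hA : A.PosSemidef) : 0 ≤ A.trace :=
  Finset.sum_nonneg fun i _ => psd_diag_nonneg hA i

lemma psd_trace_mul_nonneg {A B : Matrix n n ℂ} (hA : A.PosSemidef) (hB : B.PosSemidef) :
    0 ≤ (A * B).trace := by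
  obtain ⟨C, rfl⟩ : ∃ C : Matrix n n ℂ, B = C.conjTranspose * C := by
    open scoped MatrixOrder in exact CStarAlgebra.nonneg_iff_eq_star_mul_self.mp hB.nonneg
  rw [← Matrix.mul_assoc, Matrix.trace_mul_cycle]
  exact psd_trace_nonneg (hA.mul_mul_conjTranspose_same C)

lemma psd_smul_real {A : Matrix n n ℂ} (hA : A.PosSemidef) {c : ℝ} (hc : 0 ≤ c) :
    ((c : ℂ) • A).PosSemidef := by
  constructor
  · unfold Matrix.IsHermitian
    rw [Matrix.conjTranspose_smul, hA.1.eq]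
    simp [Complex.conj_ofReal]
  · exact (hA.smul (a := (c : ℂ)) (by exact_mod_cast hc)).2

/-- If `B` is Hermitian with `B² = N·1` then `√N·1 + B` is PSD. -/
lemma psd_sqrt_shift {B : Matrix n n ℂ} (hB : B.IsHermitian) {N : ℕ} (hNpos : 0 < N)
    (hB2 : B * B = (N : ℂ) • 1) :
    ((Real.sqrt N : ℂ) • 1 + B).PosSemidef := by
  set s : ℝ := Real.sqrt N with hs
  have hspos : 0 < s := Real.sqrt_pos.mpr (by exact_mod_cast hNpos)
  set C : Matrix n n ℂ := (s : ℂ) • 1 + B with hC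
  have hCherm : C.IsHermitian := by
    unfold Matrix.IsHermitian
    rw [hC, Matrix.conjTranspose_add, Matrix.conjTranspose_smul, hB.eq,
      Matrix.conjTranspose_one]
    simp [Complex.conj_ofReal]
  have hsq : (s : ℂ) * (s : ℂ) = (N : ℂ) := by
    rw [← Complex.ofReal_mul, hs, Real.mul_self_sqrt (Nat.cast_nonneg N)]
    simp
  have hB2' : B * B = ((s : ℂ) * (s : ℂ)) • 1 := by rw [hsq]; exact hB2
  have hCC : C * C = ((2 * s : ℝ) : ℂ) • C := by
    rw [hC, add_mul, mul_add, mul_add, hB2']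
    simp only [Matrix.smul_mul, Matrix.mul_smul, Matrix.one_mul, Matrix.mul_one]
    push_cast
    module
  have hkey : C = (((2 * s)⁻¹ : ℝ) : ℂ) • (C.conjTranspose * C) := by
    rw [hCherm.eq, hCC, smul_smul, ← Complex.ofReal_mul,
      inv_mul_cancel₀ (by positivity : (2 : ℝ) * s ≠ 0), Complex.ofReal_one, one_smul]
  rw [hkey]
  exact psd_smul_real (Matrix.posSemidef_conjTranspose_mul_self C) (by positivity)

end Helpers

lemma clifford_square {d N : ℕ} (Γ : Fin N → Matrix (Fin d) (Fin d) ℂ)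
    (hcliff : ∀ j k, Γ j * Γ k + Γ k * Γ j =
      if j = k then (2 : ℂ) • (1 : Matrix (Fin d) (Fin d) ℂ) else 0)
    (s : Fin N → ℂ) (hs : ∀ k, s k * s k = 1) :
    (∑ k, s k • Γ k) * (∑ k, s k • Γ k) = (N : ℂ) • 1 := by
  have expand : (∑ k, s k • Γ k) * (∑ k, s k • Γ k)
      = ∑ j, ∑ k, (s j * s k) • (Γ j * Γ k) := by
    rw [Finset.sum_mul_sum]
    simp only [Matrix.smul_mul, Matrix.mul_smul, smul_smul]
    exact Finset.sum_congr rfl fun j _ => Finset.sum_congr rfl fun k _ => by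
      rw [mul_comm (s k) (s j)]
  have expand2 : (∑ k, s k • Γ k) * (∑ k, s k • Γ k)
      = ∑ j, ∑ k, (s j * s k) • (Γ k * Γ j) := by
    rw [expand, Finset.sum_comm]
    exact Finset.sum_congr rfl fun j _ => Finset.sum_congr rfl fun k _ => by
      rw [mul_comm (s k) (s j)]
  have h2 : (2 : ℂ) • ((∑ k, s k • Γ k) * (∑ k, s k • Γ k))
      = ∑ j, ∑ k, (s j * s k) • (Γ j * Γ k + Γ k * Γ j) := by
    rw [two_smul]
    nth_rewrite 1 [expand]
    nth_rewrite 1 [expand2]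
    rw [← Finset.sum_add_distrib]
    refine Finset.sum_congr rfl fun j _ => ?_
    rw [← Finset.sum_add_distrib]
    refine Finset.sum_congr rfl fun k _ => ?_
    rw [smul_add]
  have h3 : ∑ j, ∑ k, (s j * s k) • (Γ j * Γ k + Γ k * Γ j)
      = (2 : ℂ) • ((N : ℂ) • (1 : Matrix (Fin d) (Fin d) ℂ)) := by
    simp only [hcliff, smul_ite, smul_zero, Finset.sum_ite_eq, Finset.mem_univ, if_true,
      smul_smul, hs, one_mul]
    rw [Finset.sum_const, Finset.card_univ, Fintype.card_fin]
    rw [← Nat.cast_smul_eq_nsmul ℂ, smul_smul, mul_comm]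
  exact smul_right_injective _ (two_ne_zero) (h2.trans h3)

lemma sgn_not (c : Bool) : sgn (!c) = - sgn c := by cases c <;> simp [sgn]

lemma sgn_sq (b : Bool) : ((sgn b : ℝ) : ℂ) * ((sgn b : ℝ) : ℂ) = 1 := by
  cases b <;> simp [sgn]

lemma sum_sgn_zero {N : ℕ} (s : Finset (Fin N → Bool)) (k' : Fin N)
    (hclosed : ∀ x ∈ s, Function.update x k' (!(x k')) ∈ s) :
    ∑ x ∈ s, ((sgn (x k') : ℝ) : ℂ) = 0 := by
  refine Finset.sum_involution (fun x _ => Function.update x k' (!(x k'))) ?_ ?_ hclosed ?_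
  · intro x _
    simp only [Function.update_self, sgn_not]
    push_cast; ring
  · intro x _ h hx
    have := congrFun hx k'
    simp only [Function.update_self] at this
    exact (Bool.not_ne_self (x k')) this
  · intro x _
    funext j
    by_cases hj : j = k'
    · subst hj; simp
    · simp [Function.update_of_ne hj]

def fiberEquiv {N : ℕ} (k : Fin N) (b : Bool) :
    {x : Fin N → Bool // x k = b} ≃ ({j : Fin N // j ≠ k} → Bool) where
  toFun x j := x.1 j.1
  invFun y := ⟨fun j => if h : j = k then b else y ⟨j, h⟩, by simp⟩
  left_inv x := by
    apply Subtype.ext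
    funext j
    by_cases h : j = k
    · subst h; simpa using x.2.symm
    · simp [h]
  right_inv y := by
    funext j
    simp [j.2]

lemma card_fiber {N : ℕ} (k : Fin N) (b : Bool) :
    (Finset.univ.filter (fun x : Fin N → Bool => x k = b)).card = 2 ^ (N - 1) := by
  rw [← Fintype.card_subtype, Fintype.card_congr (fiberEquiv k b)]
  rw [Fintype.card_fun]
  simp [Fintype.card_subtype_compl]
lemma clifford_suff
    (d N : ℕ) (hN : 2 ≤ N)
    (Γ : Fin N → Matrix (Fin d) (Fin d) ℂ)
    (hherm : ∀ j, (Γ j).IsHermitian)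
    (hcliff : ∀ j k, Γ j * Γ k + Γ k * Γ j =
      if j = k then (2 : ℂ) • (1 : Matrix (Fin d) (Fin d) ℂ) else 0)
    (η : ℝ) (hη : η ∈ Set.Icc (0 : ℝ) 1) (hη' : η ≤ 1 / Real.sqrt N) :
      (∀ x : Fin N → Bool,
        (((2 : ℂ) ^ N)⁻¹ • ((1 : Matrix (Fin d) (Fin d) ℂ)
          + (η : ℂ) • ∑ k, ((sgn (x k) : ℝ) : ℂ) • Γ k)).PosSemidef) ∧
      (∑ x : Fin N → Bool, ((2 : ℂ) ^ N)⁻¹ • ((1 : Matrix (Fin d) (Fin d) ℂ)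
          + (η : ℂ) • ∑ k, ((sgn (x k) : ℝ) : ℂ) • Γ k) = 1) ∧
      (∀ k b, ∑ x ∈ Finset.univ.filter (fun x : Fin N → Bool => x k = b),
          ((2 : ℂ) ^ N)⁻¹ • ((1 : Matrix (Fin d) (Fin d) ℂ)
            + (η : ℂ) • ∑ k', ((sgn (x k') : ℝ) : ℂ) • Γ k')
          = ((1 : ℂ) / 2) •
              ((1 : Matrix (Fin d) (Fin d) ℂ) + ((η * sgn b : ℝ) : ℂ) • Γ k)) := by
  obtain ⟨hη0, hη1⟩ := hη
  have hNpos : 0 < N := by omega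
  have hsN : (0:ℝ) < Real.sqrt N := Real.sqrt_pos.mpr (by exact_mod_cast hNpos)
  set A : (Fin N → Bool) → Matrix (Fin d) (Fin d) ℂ :=
    fun x => ∑ k, ((sgn (x k) : ℝ) : ℂ) • Γ k with hA
  have hA2 : ∀ x, A x * A x = (N : ℂ) • 1 := fun x =>
    clifford_square Γ hcliff _ (fun k => sgn_sq (x k))
  have hAherm : ∀ x, (A x).IsHermitian := by
    intro x
    unfold Matrix.IsHermitian
    rw [hA, Matrix.conjTranspose_sum]
    refine Finset.sum_congr rfl fun k _ => ?_
    rw [Matrix.conjTranspose_smul, (hherm k).eq]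
    simp [Complex.conj_ofReal]
  have hinv : ((2 : ℂ) ^ N)⁻¹ = (((2 ^ N : ℝ)⁻¹ : ℝ) : ℂ) := by push_cast; ring
  refine ⟨?_, ?_, ?_⟩
  · -- PSD
    intro x
    rw [hinv]
    refine psd_smul_real ?_ (by positivity)
    have hdecomp : (1 : Matrix (Fin d) (Fin d) ℂ) + (η : ℂ) • A x
        = ((1 - η * Real.sqrt N : ℝ) : ℂ) • 1
          + ((η : ℝ) : ℂ) • (((Real.sqrt N : ℝ) : ℂ) • 1 + A x) := by
      push_cast
      module
    rw [hdecomp]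
    have h1 : (0:ℝ) ≤ 1 - η * Real.sqrt N := by
      have : η * Real.sqrt N ≤ (1 / Real.sqrt N) * Real.sqrt N :=
        mul_le_mul_of_nonneg_right hη' hsN.le
      rw [one_div, inv_mul_cancel₀ hsN.ne'] at this
      linarith
    exact (psd_smul_real Matrix.PosSemidef.one h1).add
      (psd_smul_real (psd_sqrt_shift (hAherm x) hNpos (hA2 x)) hη0)
  · -- sum to one
    rw [← Finset.smul_sum]
    have hsum : ∑ x : Fin N → Bool, ((1 : Matrix (Fin d) (Fin d) ℂ) + (η : ℂ) • A x)
        = (2 ^ N : ℕ) • (1 : Matrix (Fin d) (Fin d) ℂ) := by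
      rw [Finset.sum_add_distrib, ← Finset.smul_sum]
      have hAsum : ∑ x : Fin N → Bool, A x = 0 := by
        rw [hA]
        rw [Finset.sum_comm]
        refine Finset.sum_eq_zero fun k _ => ?_
        rw [← Finset.sum_smul, sum_sgn_zero _ k (fun x _ => Finset.mem_univ _), zero_smul]
      rw [hAsum, smul_zero, add_zero, Finset.sum_const, Finset.card_univ]
      congr 1
      simp [Fintype.card_fun]
    rw [hsum, ← Nat.cast_smul_eq_nsmul ℂ, smul_smul]
    have : ((2:ℂ)^N)⁻¹ * ((2^N : ℕ) : ℂ) = 1 := by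
      push_cast
      field_simp
    rw [this, one_smul]
  · -- marginals
    intro k b
    rw [← Finset.smul_sum]
    set F := Finset.univ.filter (fun x : Fin N → Bool => x k = b) with hF
    have hAsum : ∑ x ∈ F, A x
        = (((2 ^ (N - 1) : ℕ) : ℂ) * ((sgn b : ℝ) : ℂ)) • Γ k := by
      rw [hA, Finset.sum_comm]
      rw [Finset.sum_eq_single k]
      · have : ∑ x ∈ F, ((sgn (x k) : ℝ) : ℂ) • Γ k
            = (∑ x ∈ F, ((sgn (x k) : ℝ) : ℂ)) • Γ k := by rw [Finset.sum_smul]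
        rw [this]
        congr 1
        have : ∑ x ∈ F, ((sgn (x k) : ℝ) : ℂ) = ∑ _x ∈ F, ((sgn b : ℝ) : ℂ) :=
          Finset.sum_congr rfl fun x hx => by
            rw [(Finset.mem_filter.mp hx).2]
        rw [this, Finset.sum_const, hF, card_fiber, ← Nat.cast_smul_eq_nsmul ℂ,
          smul_eq_mul]
      · intro k' _ hk'
        rw [← Finset.sum_smul, sum_sgn_zero _ k' ?_, zero_smul]
        intro x hx
        rw [hF, Finset.mem_filter] at hx ⊢
        refine ⟨Finset.mem_univ _, ?_⟩
        rw [Function.update_of_ne (by exact fun h => hk' h.symm) _ x]  -- k ≠ k'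
        exact hx.2
      · intro h
        exact absurd (Finset.mem_univ k) h
    have hconst : ∑ _x ∈ F, (1 : Matrix (Fin d) (Fin d) ℂ) = (2 ^ (N - 1) : ℕ) • 1 := by
      rw [Finset.sum_const, hF, card_fiber]
    rw [Finset.sum_add_distrib, hconst, ← Finset.smul_sum, hAsum,
      ← Nat.cast_smul_eq_nsmul ℂ]
    have hsplit : (2 : ℂ) ^ N = 2 ^ (N - 1) * 2 := by
      conv_lhs => rw [show N = (N - 1) + 1 by omega]
      rw [pow_succ]
    match_scalars
    · push_cast
      rw [hsplit]
      have h2 : ((2:ℂ) ^ (N-1)) ≠ 0 := by positivity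
      field_simp
    · push_cast
      rw [hsplit]
      have h2 : ((2:ℂ) ^ (N-1)) ≠ 0 := by positivity
      field_simp
lemma clifford_nec
    (d N : ℕ) (hd : 1 ≤ d) (hN : 2 ≤ N)
    (Γ : Fin N → Matrix (Fin d) (Fin d) ℂ)
    (hherm : ∀ j, (Γ j).IsHermitian)
    (hcliff : ∀ j k, Γ j * Γ k + Γ k * Γ j =
      if j = k then (2 : ℂ) • (1 : Matrix (Fin d) (Fin d) ℂ) else 0)
    (η : ℝ) (hη : η ∈ Set.Icc (0 : ℝ) 1)
    (hJM : JointlyMeasurable (fun k b => ((1 : ℂ) / 2) •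
        ((1 : Matrix (Fin d) (Fin d) ℂ) + ((η * sgn b : ℝ) : ℂ) • Γ k))) :
    η ≤ 1 / Real.sqrt N := by
  obtain ⟨J, hJpsd, hJsum, hJmarg⟩ := hJM
  have hNpos : 0 < N := by omega
  have hsN : (0:ℝ) < Real.sqrt N := Real.sqrt_pos.mpr (by exact_mod_cast hNpos)
  have hNs : Real.sqrt N * Real.sqrt N = (N : ℝ) := Real.mul_self_sqrt (Nat.cast_nonneg N)
  set A : (Fin N → Bool) → Matrix (Fin d) (Fin d) ℂ :=
    fun x => ∑ k, ((sgn (x k) : ℝ) : ℂ) • Γ k with hA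
  have hA2 : ∀ x, A x * A x = (N : ℂ) • 1 := fun x =>
    clifford_square Γ hcliff _ (fun k => sgn_sq (x k))
  have hAherm : ∀ x, (A x).IsHermitian := by
    intro x
    unfold Matrix.IsHermitian
    rw [hA, Matrix.conjTranspose_sum]
    refine Finset.sum_congr rfl fun k _ => ?_
    rw [Matrix.conjTranspose_smul, (hherm k).eq]
    simp [Complex.conj_ofReal]
  -- Step 1
  have step1 : ∀ k, ∑ f : Fin N → Bool, ((sgn (f k) : ℝ) : ℂ) • J f = (η : ℂ) • Γ k := by
    intro k
    rw [← Finset.sum_filter_add_sum_filter_not Finset.univ (fun f => f k = true)]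
    have htrue : ∑ f ∈ Finset.univ.filter (fun f : Fin N → Bool => f k = true),
        ((sgn (f k) : ℝ) : ℂ) • J f
        = ∑ f ∈ Finset.univ.filter (fun f : Fin N → Bool => f k = true), J f := by
      refine Finset.sum_congr rfl fun f hf => ?_
      rw [(Finset.mem_filter.mp hf).2]
      simp [sgn]
    have hfilt : Finset.univ.filter (fun f : Fin N → Bool => ¬ f k = true)
        = Finset.univ.filter (fun f : Fin N → Bool => f k = false) := by
      apply Finset.filter_congr
      intro f _
      simp
    have hfalse : ∑ f ∈ Finset.univ.filter (fun f : Fin N → Bool => ¬ f k = true),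
        ((sgn (f k) : ℝ) : ℂ) • J f
        = - ∑ f ∈ Finset.univ.filter (fun f : Fin N → Bool => f k = false), J f := by
      rw [hfilt, ← Finset.sum_neg_distrib]
      refine Finset.sum_congr rfl fun f hf => ?_
      rw [(Finset.mem_filter.mp hf).2]
      simp [sgn]
    rw [htrue, hfalse, hJmarg k true, hJmarg k false]
    match_scalars <;> simp [sgn] <;> ring
  -- Step 2
  have hgam2 : ∀ k, Γ k * Γ k = 1 := by
    intro k
    have := hcliff k k
    rw [if_pos rfl] at this
    have h2 : (2:ℂ) • (Γ k * Γ k) = (2:ℂ) • (1 : Matrix (Fin d) (Fin d) ℂ) := by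
      rw [two_smul, this]
    exact smul_right_injective _ (two_ne_zero) h2
  have step2 : ∑ f : Fin N → Bool, A f * J f = ((η * N : ℝ) : ℂ) • 1 := by
    have expand : ∀ f : Fin N → Bool, A f * J f
        = ∑ k, Γ k * (((sgn (f k) : ℝ) : ℂ) • J f) := by
      intro f
      rw [hA, Finset.sum_mul]
      exact Finset.sum_congr rfl fun k _ => by
        rw [Matrix.smul_mul, Matrix.mul_smul]
    rw [Finset.sum_congr rfl fun f _ => expand f, Finset.sum_comm]
    have : ∀ k : Fin N, ∑ f : Fin N → Bool, Γ k * (((sgn (f k) : ℝ) : ℂ) • J f)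
        = (η : ℂ) • (1 : Matrix (Fin d) (Fin d) ℂ) := by
      intro k
      rw [← Finset.mul_sum, step1, Matrix.mul_smul, hgam2]
    rw [Finset.sum_congr rfl fun k _ => this k, Finset.sum_const, Finset.card_univ,
      Fintype.card_fin, ← Nat.cast_smul_eq_nsmul ℂ, smul_smul]
    push_cast
    congr 1
    ring
  -- Step 3: trace inequality
  have key : ∀ f : Fin N → Bool, (A f * J f).trace
      ≤ ((Real.sqrt N : ℝ) : ℂ) * (J f).trace := by
    intro f
    have hpsd1 : ((Real.sqrt N : ℂ) • 1 - A f).PosSemidef := by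
      have hneg : (-(A f)).IsHermitian := (hAherm f).neg
      have hneg2 : (-(A f)) * (-(A f)) = (N : ℂ) • 1 := by
        rw [neg_mul_neg]; exact hA2 f
      have := psd_sqrt_shift hneg hNpos hneg2
      rwa [← sub_eq_add_neg] at this
    have := psd_trace_mul_nonneg hpsd1 (hJpsd f)
    rw [Matrix.sub_mul, Matrix.trace_sub, Matrix.smul_mul, Matrix.one_mul,
      Matrix.trace_smul, sub_nonneg] at this
    simpa using this
  have sum_key : ((η * N * d : ℝ) : ℂ) ≤ ((Real.sqrt N * d : ℝ) : ℂ) := by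
    have hLHS : ∑ f : Fin N → Bool, (A f * J f).trace = ((η * N * d : ℝ) : ℂ) := by
      rw [← Matrix.trace_sum, step2, Matrix.trace_smul, Matrix.trace_one]
      push_cast
      simp [smul_eq_mul]
    have hRHS : ∑ f : Fin N → Bool, ((Real.sqrt N : ℝ) : ℂ) * (J f).trace
        = ((Real.sqrt N * d : ℝ) : ℂ) := by
      rw [← Finset.mul_sum, ← Matrix.trace_sum, hJsum, Matrix.trace_one]
      push_cast [Fintype.card_fin]
      ring
    calc ((η * N * d : ℝ) : ℂ) = ∑ f : Fin N → Bool, (A f * J f).trace := hLHS.symm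
      _ ≤ ∑ f : Fin N → Bool, ((Real.sqrt N : ℝ) : ℂ) * (J f).trace :=
          Finset.sum_le_sum fun f _ => key f
      _ = ((Real.sqrt N * d : ℝ) : ℂ) := hRHS
  have real_key : η * N * d ≤ Real.sqrt N * d := by exact_mod_cast sum_key
  have hdpos : (0:ℝ) < d := by exact_mod_cast hd
  have hstep : η * N ≤ Real.sqrt N := le_of_mul_le_mul_right (by linarith [real_key]) hdpos
  rw [le_div_iff₀ hsN]
  nlinarith [hη.1, hsN, hNs, hstep]

/-- **Joint measurability of Clifford-algebra POVMs.** For Hermitian `Γ_1, …, Γ_N` satisfying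
`Γ_j Γ_k + Γ_k Γ_j = 2δ_{jk} I`, the binary POVMs `M_k = {½(I ± ηΓ_k)}` are jointly measurable
iff `η ≤ 1/√N`; moreover in that case `E_x = 2^{−N}(I + η Σ_k x_k Γ_k)` is a joint POVM. -/
theorem clifford_povm_joint_measurability
    (d N : ℕ) (hd : 1 ≤ d) (hN : 2 ≤ N)
    (Γ : Fin N → Matrix (Fin d) (Fin d) ℂ)
    (hherm : ∀ j, (Γ j).IsHermitian)
    (hcliff : ∀ j k, Γ j * Γ k + Γ k * Γ j =
      if j = k then (2 : ℂ) • (1 : Matrix (Fin d) (Fin d) ℂ) else 0)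
    (η : ℝ) (hη : η ∈ Set.Icc (0 : ℝ) 1) :
    (JointlyMeasurable (fun k b => ((1 : ℂ) / 2) •
        ((1 : Matrix (Fin d) (Fin d) ℂ) + ((η * sgn b : ℝ) : ℂ) • Γ k)) ↔
      η ≤ 1 / Real.sqrt N) ∧
    (η ≤ 1 / Real.sqrt N →
      (∀ x : Fin N → Bool,
        (((2 : ℂ) ^ N)⁻¹ • ((1 : Matrix (Fin d) (Fin d) ℂ)
          + (η : ℂ) • ∑ k, ((sgn (x k) : ℝ) : ℂ) • Γ k)).PosSemidef) ∧
      (∑ x : Fin N → Bool, ((2 : ℂ) ^ N)⁻¹ • ((1 : Matrix (Fin d) (Fin d) ℂ)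
          + (η : ℂ) • ∑ k, ((sgn (x k) : ℝ) : ℂ) • Γ k) = 1) ∧
      (∀ k b, ∑ x ∈ Finset.univ.filter (fun x : Fin N → Bool => x k = b),
          ((2 : ℂ) ^ N)⁻¹ • ((1 : Matrix (Fin d) (Fin d) ℂ)
            + (η : ℂ) • ∑ k', ((sgn (x k') : ℝ) : ℂ) • Γ k')
          = ((1 : ℂ) / 2) •
              ((1 : Matrix (Fin d) (Fin d) ℂ) + ((η * sgn b : ℝ) : ℂ) • Γ k))) := by
  constructor
  · constructor
    · exact fun h => clifford_nec d N hd hN Γ hherm hcliff η hη h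
    · intro hη'
      obtain ⟨hpsd, hsum, hmarg⟩ := clifford_suff d N hN Γ hherm hcliff η hη hη'
      exact ⟨_, hpsd, hsum, hmarg⟩
  · intro hη'
    exact clifford_suff d N hN Γ hherm hcliff η hη hη'
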